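/- arXiv:2509.24820 — 6 statements merged into one kernel-verified Lean document; each statement's English description precedes it below -/
import Mathlib

section
/- Let π : ℝ → ℝ be the unnormalized posterior density π(θ) = ((θ²+1)/(θ²+2))^{T/2} · exp( -(1/2)( ((θ²+1)/(θ²+2)) ∑_{t=1}^T (θ - y_t)² + θ²/σ₀² ) ), where T ≥ 1, y_1,...,y_T ∈ ℝ, and σ₀ > 0. Then (θ/|θ|) · (d/dθ) log π(θ) → -∞ as |θ| → ∞. -/
/-!
Write `s = θ / |θ|`, `r(θ) = (θ² + 1) / (θ² + 2) ∈ (0, 1]` and `S(θ) = ∑ₜ (θ - yₜ)²`, so that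
`log π = (T/2) log r - (r S + θ² / σ₀²) / 2`. In `s · (log π)'` the Jacobian term `(T/2) s r'/r`
is at most `T/2`, the term `-s r' S / 2` is nonpositive because `r'` has the sign of `θ`, the data
term `-r s S' / 2` is at most `∑ₜ |yₜ|` because `r ≤ 1`, and the prior contributes `-|θ| / σ₀²`.
Hence `s · (log π)' ≤ T/2 + ∑ₜ |yₜ| - |θ| / σ₀²`.
-/

open Filter Real

lemma div_abs_mul_self (x : ℝ) : x / |x| * x = |x| := by
  rw [div_mul_eq_mul_div, ← abs_mul_abs_self, mul_self_div_self]

lemma div_abs_mul_le_abs (x y : ℝ) : x / |x| * y ≤ |y| := by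
  refine (le_abs_self _).trans ?_
  rw [abs_mul, abs_div, abs_abs]
  exact mul_le_of_le_one_left (abs_nonneg y) (div_self_le_one _)

/-- The precision of the marginal law `Y_t | θ ~ N(θ, 1 + 1 / (θ² + 1))`. -/
noncomputable def marginalPrecision (θ : ℝ) : ℝ := (θ ^ 2 + 1) / (θ ^ 2 + 2)

lemma marginalPrecision_pos (θ : ℝ) : 0 < marginalPrecision θ := by
  unfold marginalPrecision; positivity

lemma marginalPrecision_le_one (θ : ℝ) : marginalPrecision θ ≤ 1 := by
  unfold marginalPrecision
  rw [div_le_one (by positivity)]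
  linarith

lemma hasDerivAt_marginalPrecision (θ : ℝ) :
    HasDerivAt marginalPrecision (2 * θ / (θ ^ 2 + 2) ^ 2) θ := by
  have h := ((hasDerivAt_pow 2 θ).add_const 1).div ((hasDerivAt_pow 2 θ).add_const 2)
    (by positivity : θ ^ 2 + 2 ≠ 0)
  exact h.congr_deriv (by field_simp; ring)

lemma hasDerivAt_sum_sq_sub {ι : Type*} [Fintype ι] (y : ι → ℝ) (θ : ℝ) :
    HasDerivAt (fun θ => ∑ i, (θ - y i) ^ 2) (∑ i, 2 * (θ - y i)) θ := by
  have h := HasDerivAt.fun_sum (u := Finset.univ) fun i _ =>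
    ((hasDerivAt_id θ).sub_const (y i)).pow 2
  exact h.congr_deriv (by simp)

section LogPosterior

variable {ι : Type*} [Fintype ι] (a : ℝ) (y : ι → ℝ) (σ : ℝ)

noncomputable def logPosterior (θ : ℝ) : ℝ :=
  a * log (marginalPrecision θ) +
    -(1 / 2) * (marginalPrecision θ * ∑ i, (θ - y i) ^ 2 + θ ^ 2 / σ ^ 2)

lemma log_rpow_mul_exp_eq_logPosterior (θ : ℝ) :
    log (marginalPrecision θ ^ a *
      exp (-(1 / 2) * (marginalPrecision θ * ∑ i, (θ - y i) ^ 2 + θ ^ 2 / σ ^ 2))) =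
      logPosterior a y σ θ := by
  rw [log_mul (rpow_pos_of_pos (marginalPrecision_pos θ) a).ne' (exp_ne_zero _),
    log_rpow (marginalPrecision_pos θ), log_exp, logPosterior]

lemma hasDerivAt_logPosterior (θ : ℝ) :
    HasDerivAt (logPosterior a y σ)
      (a * (2 * θ / (θ ^ 2 + 2) ^ 2 / marginalPrecision θ) +
        -(1 / 2) * (2 * θ / (θ ^ 2 + 2) ^ 2 * ∑ i, (θ - y i) ^ 2 +
          marginalPrecision θ * ∑ i, 2 * (θ - y i) + 2 * θ / σ ^ 2)) θ := by
  have hr := hasDerivAt_marginalPrecision θ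
  have hq : HasDerivAt (fun θ : ℝ => θ ^ 2 / σ ^ 2) (2 * θ / σ ^ 2) θ :=
    ((hasDerivAt_pow 2 θ).div_const _).congr_deriv (by simp)
  exact ((hr.log (marginalPrecision_pos θ).ne').const_mul a).add
    (((hr.mul (hasDerivAt_sum_sq_sub y θ)).add hq).const_mul _)

lemma div_abs_mul_deriv_logPosterior_le (ha : 0 ≤ a) (θ : ℝ) :
    θ / |θ| * deriv (logPosterior a y σ) θ ≤ a + ∑ i, |y i| - |θ| / σ ^ 2 := by
  rw [(hasDerivAt_logPosterior a y σ θ).deriv]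
  set s := θ / |θ|
  set r := marginalPrecision θ
  have hsθ : s * θ = |θ| := div_abs_mul_self θ
  have hsy : ∀ i, s * y i ≤ |y i| := fun i => div_abs_mul_le_abs θ (y i)
  have hr₀ : 0 < r := marginalPrecision_pos θ
  have hr₁ : r ≤ 1 := marginalPrecision_le_one θ
  have hjac : s * (2 * θ / (θ ^ 2 + 2) ^ 2 / r) ≤ 1 := by
    have hr : s * (2 * θ / (θ ^ 2 + 2) ^ 2 / r) = 2 * |θ| / ((θ ^ 2 + 2) * (θ ^ 2 + 1)) := by
      rw [← hsθ]
      simp only [r, marginalPrecision]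
      field_simp
    rw [hr, div_le_one (by positivity)]
    nlinarith [sq_abs θ, sq_nonneg (|θ| - 1), sq_nonneg θ]
  have hprior : 1 / 2 * (s * (2 * θ / σ ^ 2)) = |θ| / σ ^ 2 := by
    rw [← hsθ]; ring
  have hlik : 0 ≤ s * (2 * θ / (θ ^ 2 + 2) ^ 2) * ∑ i, (θ - y i) ^ 2 := by
    refine mul_nonneg ?_ (Finset.sum_nonneg fun i _ => sq_nonneg _)
    rw [← mul_div_assoc, mul_left_comm, hsθ]
    positivity
  have hdata : -2 * ∑ i, |y i| ≤ r * (s * ∑ i, 2 * (θ - y i)) := by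
    have hsum : -2 * ∑ i, |y i| ≤ s * ∑ i, 2 * (θ - y i) := by
      rw [Finset.mul_sum, Finset.mul_sum]
      refine Finset.sum_le_sum fun i _ => ?_
      linarith [hsy i, abs_nonneg θ]
    have hy : 0 ≤ ∑ i, |y i| := Finset.sum_nonneg fun i _ => abs_nonneg _
    nlinarith
  linear_combination mul_le_of_le_one_right ha hjac + 1 / 2 * hlik + 1 / 2 * hdata - hprior

end LogPosterior

lemma tendsto_cocompact_atBot_of_le_sub_mul_abs {f : ℝ → ℝ} {C c : ℝ} (hc : 0 < c)
    (hf : ∀ x, f x ≤ C - c * |x|) : Tendsto f (cocompact ℝ) atBot := by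
  refine tendsto_atBot_mono hf (tendsto_atBot_add_const_left _ C ?_)
  exact tendsto_neg_atTop_atBot.comp (tendsto_norm_cocompact_atTop.const_mul_atTop hc)

theorem superexp_tails_synthetic_general (T : ℕ) (y : Fin T → ℝ) (σ₀ : ℝ) (hσ₀ : 0 < σ₀)
    (p : ℝ → ℝ)
    (hπ : ∀ θ : ℝ, p θ =
      ((θ ^ 2 + 1) / (θ ^ 2 + 2)) ^ ((T : ℝ) / 2) *
        Real.exp (-(1 / 2) * (((θ ^ 2 + 1) / (θ ^ 2 + 2)) * ∑ t : Fin T, (θ - y t) ^ 2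
          + θ ^ 2 / σ₀ ^ 2))) :
    Tendsto (fun θ : ℝ => (θ / |θ|) * deriv (fun t => Real.log (p t)) θ)
      (Filter.cocompact ℝ) Filter.atBot := by
  have hlog : (fun θ => log (p θ)) = logPosterior ((T : ℝ) / 2) y σ₀ := funext fun θ => by
    rw [hπ θ]
    exact log_rpow_mul_exp_eq_logPosterior _ y σ₀ θ
  rw [hlog]
  refine tendsto_cocompact_atBot_of_le_sub_mul_abs (C := T / 2 + ∑ t, |y t|) (by positivity :
    0 < 1 / σ₀ ^ 2) fun θ => ?_
  exact (div_abs_mul_deriv_logPosterior_le _ y σ₀ (by positivity) θ).trans_eq (by ring)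

/-- Super-exponential tails for the synthetic-example posterior:
`(θ/|θ|) · (log π)'(θ) → -∞` as `|θ| → ∞`. -/
theorem superexp_tails_synthetic (T : ℕ) (hT : 1 ≤ T) (y : Fin T → ℝ) (σ₀ : ℝ) (hσ₀ : 0 < σ₀)
    (p : ℝ → ℝ)
    (hπ : ∀ θ : ℝ, p θ =
      ((θ ^ 2 + 1) / (θ ^ 2 + 2)) ^ ((T : ℝ) / 2) *
        Real.exp (-(1 / 2) * (((θ ^ 2 + 1) / (θ ^ 2 + 2)) * ∑ t : Fin T, (θ - y t) ^ 2
          + θ ^ 2 / σ₀ ^ 2))) :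
    Tendsto (fun θ : ℝ => (θ / |θ|) * deriv (fun t => Real.log (p t)) θ)
      (Filter.cocompact ℝ) Filter.atBot :=
  superexp_tails_synthetic_general T y σ₀ hσ₀ p hπ
end

section
/- Let U ~ N(θ, 1/(θ²+1)) and define the single-observation importance weight R = φ(y; U, 1) / φ(y; θ, (θ²+2)/(θ²+1)), where φ(x; μ, σ²) is the N(μ, σ²) density. Then E[R²] = ((θ²+2)/√((θ²+1)(θ²+3))) · exp( (θ²+1)(θ - y)² / ((θ²+2)(θ²+3)) ), which is finite for every θ ∈ ℝ. -/
/-!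
Squaring the likelihood gives `φ(y; u, σ)² = φ(y; y, 2σ) · φ(u; y, σ/2)`, and the product of two
Gaussian densities in `u` is again a Gaussian density in `u`, times the density of the difference
of the means at the sum of the variances. Hence the squared weight integrates against
`N(θ, 1/(θ²+1))` to an explicit constant, whose closed form is a direct computation.
-/

open MeasureTheory ProbabilityTheory Real NNReal

namespace ProbabilityTheory

lemma integrable_gaussianReal_iff {E : Type*} [NormedAddCommGroup E] [NormedSpace ℝ E]
    {μ : ℝ} {v : ℝ≥0} {f : ℝ → E} (hv : v ≠ 0) :
    Integrable f (gaussianReal μ v) ↔ Integrable (fun x ↦ gaussianPDFReal μ v x • f x) := by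
  rw [gaussianReal_of_var_ne_zero μ hv, integrable_withDensity_iff_integrable_smul'
    (measurable_gaussianPDF μ v) (ae_of_all _ fun _ ↦ gaussianPDF_lt_top)]
  simp only [toReal_gaussianPDF]

lemma gaussianPDFReal_comm (μ : ℝ) (v : ℝ≥0) (x : ℝ) :
    gaussianPDFReal μ v x = gaussianPDFReal x v μ := by
  simp only [gaussianPDFReal, sub_sq_comm]

lemma gaussianPDFReal_mul_gaussianPDFReal (μ₁ μ₂ : ℝ) (v₁ v₂ : ℝ≥0) (x : ℝ) :
    gaussianPDFReal μ₁ v₁ x * gaussianPDFReal μ₂ v₂ x =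
      gaussianPDFReal μ₁ (v₁ + v₂) μ₂ *
        gaussianPDFReal ((v₂ * μ₁ + v₁ * μ₂) / (v₁ + v₂)) (v₁ * v₂ / (v₁ + v₂)) x := by
  rcases eq_or_ne v₁ 0 with rfl | h₁
  · simp
  rcases eq_or_ne v₂ 0 with rfl | h₂
  · simp
  have h₁ : (0 : ℝ) < v₁ := NNReal.coe_pos.2 (pos_iff_ne_zero.2 h₁)
  have h₂ : (0 : ℝ) < v₂ := NNReal.coe_pos.2 (pos_iff_ne_zero.2 h₂)
  simp only [gaussianPDFReal, NNReal.coe_add, NNReal.coe_mul, NNReal.coe_div]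
  rw [mul_mul_mul_comm, mul_mul_mul_comm _ (rexp _), ← mul_inv, ← mul_inv, ← exp_add, ← exp_add,
    ← sqrt_mul (by positivity), ← sqrt_mul (by positivity)]
  congr 1
  · congr 2
    field_simp
  · congr 1
    field_simp
    ring

lemma sq_gaussianPDFReal (μ : ℝ) (v : ℝ≥0) (x : ℝ) :
    gaussianPDFReal μ v x ^ 2 = gaussianPDFReal μ (2 * v) μ * gaussianPDFReal μ (v / 2) x := by
  rcases eq_or_ne v 0 with rfl | hv
  · simp
  rw [sq, gaussianPDFReal_mul_gaussianPDFReal, two_mul]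
  congr 2
  · field_simp
  · rw [← two_mul, mul_div_mul_right _ _ hv]

lemma integral_sq_gaussianPDFReal_gaussianReal (μ y : ℝ) {v σ : ℝ≥0} (hv : v ≠ 0) (hσ : σ ≠ 0) :
    Integrable (fun x ↦ gaussianPDFReal x σ y ^ 2) (gaussianReal μ v) ∧
      ∫ x, gaussianPDFReal x σ y ^ 2 ∂gaussianReal μ v =
        gaussianPDFReal y (2 * σ) y * gaussianPDFReal μ (v + σ / 2) y := by
  set c := gaussianPDFReal y (2 * σ) y * gaussianPDFReal μ (v + σ / 2) y
  set m : ℝ := ((σ / 2 : ℝ≥0) * μ + v * y) / (v + (σ / 2 : ℝ≥0))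
  set w := v * (σ / 2) / (v + σ / 2)
  have hw : w ≠ 0 := by simp [w, hv, hσ]
  have key : ∀ x, gaussianPDFReal μ v x • gaussianPDFReal x σ y ^ 2 = c * gaussianPDFReal m w x := by
    intro x
    rw [smul_eq_mul, gaussianPDFReal_comm x, sq_gaussianPDFReal, mul_left_comm,
      gaussianPDFReal_mul_gaussianPDFReal, ← mul_assoc]
  refine ⟨(integrable_gaussianReal_iff hv).2 ?_, ?_⟩
  · simp_rw [key]
    exact (integrable_gaussianPDFReal m w).const_mul c
  · rw [integral_gaussianReal_eq_integral_smul hv]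
    simp_rw [key]
    rw [integral_const_mul, integral_gaussianPDFReal_eq_one m hw, mul_one]

end ProbabilityTheory

lemma second_moment_closed_form (θ y : ℝ) :
    gaussianPDFReal y 2 y * gaussianPDFReal θ ((1 / (θ ^ 2 + 1)).toNNReal + 1 / 2) y /
        gaussianPDFReal θ ((θ ^ 2 + 2) / (θ ^ 2 + 1)).toNNReal y ^ 2 =
      ((θ ^ 2 + 2) / √((θ ^ 2 + 1) * (θ ^ 2 + 3))) *
        rexp ((θ ^ 2 + 1) * (θ - y) ^ 2 / ((θ ^ 2 + 2) * (θ ^ 2 + 3))) := by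
  have hA : 0 < θ ^ 2 + 1 := by positivity
  simp only [gaussianPDFReal, NNReal.coe_add, NNReal.coe_ofNat, NNReal.coe_div, NNReal.coe_one,
    Real.coe_toNNReal _ (by positivity : 0 ≤ 1 / (θ ^ 2 + 1)),
    Real.coe_toNNReal _ (by positivity : 0 ≤ (θ ^ 2 + 2) / (θ ^ 2 + 1))]
  rw [show 1 / (θ ^ 2 + 1) + 1 / 2 = (θ ^ 2 + 3) / (2 * (θ ^ 2 + 1)) by field_simp; ring,
    mul_pow, inv_pow, sq_sqrt (by positivity), ← exp_nat_mul, div_eq_mul_inv, mul_inv, inv_inv,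
    ← exp_neg, show ∀ a b c d e f : ℝ, a * rexp b * (c * rexp d) * (e * rexp f) =
      (a * c * e) * rexp (b + d + f) by intros; rw [exp_add, exp_add]; ring]
  congr 1
  · rw [← mul_inv, ← sqrt_mul (by positivity),
      show 2 * π * 2 * (2 * π * ((θ ^ 2 + 3) / (2 * (θ ^ 2 + 1)))) =
        (2 * π / (θ ^ 2 + 1)) ^ 2 * ((θ ^ 2 + 1) * (θ ^ 2 + 3)) by field_simp,
      sqrt_mul (by positivity), sqrt_sq (by positivity)]
    field_simp
  · congr 1
    field_simp
    ring

/-- Second moment of the single-observation importance weight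
`R = φ(y; U, 1) / φ(y; θ, (θ²+2)/(θ²+1))` with `U ~ N(θ, 1/(θ²+1))`:
`E[R²] = ((θ²+2)/√((θ²+1)(θ²+3))) · exp((θ²+1)(θ-y)²/((θ²+2)(θ²+3)))`, finite for every `θ`. -/
theorem second_moment_importance_weight (θ y : ℝ) :
    Integrable
        (fun u : ℝ => (gaussianPDFReal u 1 y /
          gaussianPDFReal θ (Real.toNNReal ((θ ^ 2 + 2) / (θ ^ 2 + 1))) y) ^ 2)
        (gaussianReal θ (Real.toNNReal (1 / (θ ^ 2 + 1)))) ∧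
      ∫ u : ℝ, (gaussianPDFReal u 1 y /
            gaussianPDFReal θ (Real.toNNReal ((θ ^ 2 + 2) / (θ ^ 2 + 1))) y) ^ 2
          ∂(gaussianReal θ (Real.toNNReal (1 / (θ ^ 2 + 1)))) =
        ((θ ^ 2 + 2) / Real.sqrt ((θ ^ 2 + 1) * (θ ^ 2 + 3))) *
          Real.exp ((θ ^ 2 + 1) * (θ - y) ^ 2 / ((θ ^ 2 + 2) * (θ ^ 2 + 3))) := by
  have hv : (1 / (θ ^ 2 + 1)).toNNReal ≠ 0 := by
    rw [Ne, Real.toNNReal_eq_zero, not_le]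
    positivity
  obtain ⟨hint, hintegral⟩ := integral_sq_gaussianPDFReal_gaussianReal θ y hv one_ne_zero
  simp_rw [div_pow]
  refine ⟨hint.div_const _, ?_⟩
  rw [integral_div, hintegral, mul_one, second_moment_closed_form]
end

section
/- As |θ| → ∞, the quantity ((θ²+2)^T / ((θ²+1)^{T/2}(θ²+3)^{T/2})) · exp( ((θ²+1)/((θ²+2)(θ²+3))) ∑_{t=1}^T (θ - y_t)² ) converges to exp(T). Consequently sup_{θ∈ℝ} E[W₁(θ)²] < ∞ where W₁(θ) = ∏_{t=1}^T φ(y_t; U_{t}, 1)/φ(y_t; θ, (θ²+2)/(θ²+1)) with U_t i.i.d. N(θ, 1/(θ²+1)). -/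
/-!
The squared weight factorises over `t`. Since `φ(y; u, 1)² = (2π)⁻¹ exp (-(u - y)²)` and the
denominator does not depend on `u`, each factor is a Gaussian integral of `exp (-(u - y)²)`
against `N(θ, s)`, which completing the square evaluates in closed form. In the variable
`x = θ⁻¹` the closed form extends continuously to `x = 0`, with value `exp T`; and a continuous
function with a finite limit at infinity is bounded.
-/

open MeasureTheory ProbabilityTheory Filter Set Topology
open scoped NNReal Real

theorem Continuous.bddAbove_range_of_tendsto_cocompact {X α : Type*} [TopologicalSpace X]
    [LinearOrder α] [TopologicalSpace α] [OrderTopology α] {f : X → α}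
    (hf : Continuous f) {a : α} (h : Tendsto f (cocompact X) (𝓝 a)) : BddAbove (range f) := by
  have : Nonempty α := ⟨a⟩
  obtain ⟨b, hb⟩ := h.isBoundedUnder_le
  obtain ⟨K, hK, hKb⟩ := mem_cocompact.1 (eventually_map.1 hb)
  obtain ⟨c, hc⟩ := hK.bddAbove_image hf.continuousOn
  refine ⟨max b c, forall_mem_range.2 fun x => ?_⟩
  by_cases hx : x ∈ K
  · exact (hc (mem_image_of_mem f hx)).trans (le_max_right _ _)
  · exact (hKb hx).trans (le_max_left _ _)

theorem tendsto_cocompact_of_eq_comp_inv {𝕜 E : Type*} [NormedDivisionRing 𝕜] [ProperSpace 𝕜]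
    [TopologicalSpace E] {f g : 𝕜 → E} (hg : ContinuousAt g 0) (hfg : ∀ x ≠ 0, f x = g x⁻¹) :
    Tendsto f (cocompact 𝕜) (𝓝 (g 0)) := by
  have hinv : Tendsto Inv.inv (cocompact 𝕜) (𝓝 (0 : 𝕜)) :=
    Metric.cobounded_eq_cocompact (α := 𝕜) ▸ tendsto_inv₀_cobounded
  refine (hg.tendsto.comp hinv).congr' ?_
  filter_upwards [(isCompact_singleton (x := (0 : 𝕜))).compl_mem_cocompact] with x hx
  exact (hfg x hx).symm

theorem sqrt_sq_div_mul_pow {a b c : ℝ} (ha : 0 ≤ a) (hb : 0 ≤ b) (hc : 0 ≤ c) (T : ℕ) :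
    √(a ^ 2 / (b * c)) ^ T = a ^ T / (b ^ ((T : ℝ) / 2) * c ^ ((T : ℝ) / 2)) := by
  rw [Real.rpow_div_two_eq_sqrt _ hb, Real.rpow_div_two_eq_sqrt _ hc, Real.rpow_natCast,
    Real.rpow_natCast, ← mul_pow, ← div_pow, Real.sqrt_div' _ (mul_nonneg hb hc),
    Real.sqrt_sq ha, Real.sqrt_mul hb]

theorem gaussianPDFReal_sq (μ : ℝ) (v : ℝ≥0) (x : ℝ) :
    gaussianPDFReal μ v x ^ 2 = (2 * π * v)⁻¹ * rexp (-(x - μ) ^ 2 / v) := by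
  rw [gaussianPDFReal, mul_pow, inv_pow, Real.sq_sqrt (by positivity), ← Real.exp_nat_mul]
  congr 2
  by_cases hv : (v : ℝ) = 0
  · simp [hv]
  · field_simp
    ring

theorem integral_exp_neg_mul_sq_sub_gaussianReal (m c : ℝ) {b : ℝ} (hb : 0 ≤ b) (s : ℝ≥0) :
    ∫ u, rexp (-(b * (u - c) ^ 2)) ∂gaussianReal m s
      = (√(1 + 2 * b * s))⁻¹ * rexp (-(b * (m - c) ^ 2 / (1 + 2 * b * s))) := by
  rcases eq_or_ne s 0 with rfl | hs
  · simp
  have hd : 0 < 1 + 2 * b * s := by positivity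
  set A := (1 + 2 * b * s) / (2 * s)
  set m' := (m + 2 * b * s * c) / (1 + 2 * b * s)
  have hsq : ∀ u, gaussianPDFReal m s u • rexp (-(b * (u - c) ^ 2))
      = ((√(2 * π * s))⁻¹ * rexp (-(b * (m - c) ^ 2 / (1 + 2 * b * s)))) *
          rexp (-A * (u - m') ^ 2) := by
    intro u
    simp only [gaussianPDFReal, smul_eq_mul, mul_assoc, ← Real.exp_add]
    congr 2
    simp only [A, m']
    field_simp
    ring
  simp_rw [integral_gaussianReal_eq_integral_smul hs, hsq, integral_const_mul,
    integral_sub_right_eq_self (fun u => rexp (-A * u ^ 2)) m', integral_gaussian]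
  rw [mul_right_comm]
  congr 1
  have hπA : π / A = (2 * π * s) / (1 + 2 * b * s) := by
    simp only [A]
    field_simp
  rw [hπA, Real.sqrt_div' _ hd.le]
  field_simp

theorem integral_sq_gaussianPDFReal_div (θ c : ℝ) {v : ℝ≥0} (hv : v ≠ 0) (s : ℝ≥0) :
    ∫ u, (gaussianPDFReal u 1 c / gaussianPDFReal θ v c) ^ 2 ∂gaussianReal θ s
      = v / √(1 + 2 * s) * rexp ((θ - c) ^ 2 / v - (θ - c) ^ 2 / (1 + 2 * s)) := by
  have hratio : ∀ u, (gaussianPDFReal u 1 c / gaussianPDFReal θ v c) ^ 2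
      = (v * rexp ((θ - c) ^ 2 / v)) * rexp (-(1 * (u - c) ^ 2)) := by
    intro u
    rw [div_pow, gaussianPDFReal_sq, gaussianPDFReal_sq, NNReal.coe_one]
    simp only [div_one, one_mul, mul_one, neg_div, Real.exp_neg, sub_sq_comm c]
    field_simp
  simp_rw [hratio, integral_const_mul, integral_exp_neg_mul_sq_sub_gaussianReal θ c zero_le_one]
  simp only [one_mul, mul_one, Real.exp_sub, Real.exp_neg]
  ring

theorem integral_sq_gaussianPDFReal_div_eq_sqrt_mul_exp (θ c : ℝ) :
    ∫ u, (gaussianPDFReal u 1 c /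
        gaussianPDFReal θ (Real.toNNReal ((θ ^ 2 + 2) / (θ ^ 2 + 1))) c) ^ 2
        ∂gaussianReal θ (Real.toNNReal (1 / (θ ^ 2 + 1)))
      = √((θ ^ 2 + 2) ^ 2 / ((θ ^ 2 + 1) * (θ ^ 2 + 3))) *
          rexp ((θ ^ 2 + 1) / ((θ ^ 2 + 2) * (θ ^ 2 + 3)) * (θ - c) ^ 2) := by
  have hv : Real.toNNReal ((θ ^ 2 + 2) / (θ ^ 2 + 1)) ≠ 0 := by
    rw [Ne, Real.toNNReal_eq_zero, not_le]
    positivity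
  rw [integral_sq_gaussianPDFReal_div θ c hv, Real.coe_toNNReal _ (by positivity),
    Real.coe_toNNReal _ (by positivity)]
  have hvar : 1 + 2 * (1 / (θ ^ 2 + 1)) = (θ ^ 2 + 3) / (θ ^ 2 + 1) := by
    field_simp
    ring
  have h1 : (0 : ℝ) < θ ^ 2 + 1 := by positivity
  rw [hvar]
  congr 1
  · rw [Real.sqrt_div' _ h1.le, Real.sqrt_div' _ (by positivity),
      Real.sqrt_sq (by positivity), Real.sqrt_mul h1.le]
    field_simp
    rw [Real.sq_sqrt h1.le]
  · congr 1
    field_simp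
    ring

noncomputable def weightSecondMoment (T : ℕ) (y : Fin T → ℝ) (θ : ℝ) : ℝ :=
  ((θ ^ 2 + 2) ^ T / ((θ ^ 2 + 1) ^ ((T : ℝ) / 2) * (θ ^ 2 + 3) ^ ((T : ℝ) / 2))) *
    Real.exp (((θ ^ 2 + 1) / ((θ ^ 2 + 2) * (θ ^ 2 + 3))) * ∑ t : Fin T, (θ - y t) ^ 2)

theorem weightSecondMoment_eq_sqrt_pow_mul_exp (T : ℕ) (y : Fin T → ℝ) (θ : ℝ) :
    weightSecondMoment T y θ = √((θ ^ 2 + 2) ^ 2 / ((θ ^ 2 + 1) * (θ ^ 2 + 3))) ^ T *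
      Real.exp (((θ ^ 2 + 1) / ((θ ^ 2 + 2) * (θ ^ 2 + 3))) * ∑ t : Fin T, (θ - y t) ^ 2) := by
  rw [weightSecondMoment, sqrt_sq_div_mul_pow (by positivity) (by positivity) (by positivity)]

theorem integral_sq_prod_gaussianPDFReal_div_eq_weightSecondMoment (T : ℕ) (y : Fin T → ℝ)
    (θ : ℝ) :
    ∫ u : Fin T → ℝ,
        (∏ t : Fin T, gaussianPDFReal (u t) 1 (y t) /
          gaussianPDFReal θ (Real.toNNReal ((θ ^ 2 + 2) / (θ ^ 2 + 1))) (y t)) ^ 2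
      ∂(Measure.pi fun _ : Fin T => gaussianReal θ (Real.toNNReal (1 / (θ ^ 2 + 1))))
      = weightSecondMoment T y θ := by
  simp_rw [← Finset.prod_pow]
  rw [integral_fintype_prod_eq_prod (fun t u => (gaussianPDFReal u 1 (y t) /
      gaussianPDFReal θ (Real.toNNReal ((θ ^ 2 + 2) / (θ ^ 2 + 1))) (y t)) ^ 2)]
  simp_rw [integral_sq_gaussianPDFReal_div_eq_sqrt_mul_exp]
  rw [Finset.prod_mul_distrib, Finset.prod_const, Finset.card_univ, Fintype.card_fin,
    ← Real.exp_sum, ← Finset.mul_sum, weightSecondMoment_eq_sqrt_pow_mul_exp]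

theorem continuous_weightSecondMoment (T : ℕ) (y : Fin T → ℝ) :
    Continuous (weightSecondMoment T y) := by
  unfold weightSecondMoment
  fun_prop (disch := intros; positivity)

theorem tendsto_weightSecondMoment (T : ℕ) (y : Fin T → ℝ) :
    Tendsto (weightSecondMoment T y) (cocompact ℝ) (𝓝 (Real.exp T)) := by
  set g : ℝ → ℝ := fun x => √((1 + 2 * x ^ 2) ^ 2 / ((1 + x ^ 2) * (1 + 3 * x ^ 2))) ^ T *
      rexp ((1 + x ^ 2) / ((1 + 2 * x ^ 2) * (1 + 3 * x ^ 2)) * ∑ t, (1 - y t * x) ^ 2)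
  have hg : Continuous g := by fun_prop (disch := intros; positivity)
  convert tendsto_cocompact_of_eq_comp_inv hg.continuousAt fun θ hθ => ?_
  · simp [g]
  have hsum : ∑ t, (θ - y t) ^ 2 = θ ^ 2 * ∑ t, (1 - y t * θ⁻¹) ^ 2 := by
    rw [Finset.mul_sum]
    refine Finset.sum_congr rfl fun t _ => ?_
    field_simp
  have hbase : (θ ^ 2 + 2) ^ 2 / ((θ ^ 2 + 1) * (θ ^ 2 + 3))
      = (1 + 2 * θ⁻¹ ^ 2) ^ 2 / ((1 + θ⁻¹ ^ 2) * (1 + 3 * θ⁻¹ ^ 2)) := by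
    field_simp
  have hcoeff : (θ ^ 2 + 1) / ((θ ^ 2 + 2) * (θ ^ 2 + 3)) * θ ^ 2
      = (1 + θ⁻¹ ^ 2) / ((1 + 2 * θ⁻¹ ^ 2) * (1 + 3 * θ⁻¹ ^ 2)) := by
    field_simp
  rw [weightSecondMoment_eq_sqrt_pow_mul_exp, hbase, hsum, ← mul_assoc, hcoeff]

theorem second_moment_uniform_bound_general (T : ℕ) (y : Fin T → ℝ) :
    Tendsto
        (fun θ : ℝ => ((θ ^ 2 + 2) ^ T / ((θ ^ 2 + 1) ^ ((T : ℝ) / 2) *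
            (θ ^ 2 + 3) ^ ((T : ℝ) / 2))) *
          Real.exp (((θ ^ 2 + 1) / ((θ ^ 2 + 2) * (θ ^ 2 + 3))) * ∑ t : Fin T, (θ - y t) ^ 2))
        (Filter.cocompact ℝ) (nhds (Real.exp T)) ∧
      ∃ M : ℝ, ∀ θ : ℝ,
        ∫ u : Fin T → ℝ,
            (∏ t : Fin T, gaussianPDFReal (u t) 1 (y t) /
              gaussianPDFReal θ (Real.toNNReal ((θ ^ 2 + 2) / (θ ^ 2 + 1))) (y t)) ^ 2
          ∂(Measure.pi fun _ : Fin T => gaussianReal θ (Real.toNNReal (1 / (θ ^ 2 + 1)))) ≤ M := by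
  have hlim := tendsto_weightSecondMoment T y
  obtain ⟨M, hM⟩ := (continuous_weightSecondMoment T y).bddAbove_range_of_tendsto_cocompact hlim
  refine ⟨hlim, M, fun θ => ?_⟩
  rw [integral_sq_prod_gaussianPDFReal_div_eq_weightSecondMoment]
  exact hM (mem_range_self θ)

/-- The explicit second-moment expression converges to `exp T` as `|θ| → ∞`, and consequently
`sup_θ E[W₁(θ)²] < ∞` for the synthetic-example importance-sampling weight. -/
theorem second_moment_uniform_bound (T : ℕ) (hT : 1 ≤ T) (y : Fin T → ℝ) :
    Tendsto
        (fun θ : ℝ => ((θ ^ 2 + 2) ^ T / ((θ ^ 2 + 1) ^ ((T : ℝ) / 2) *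
            (θ ^ 2 + 3) ^ ((T : ℝ) / 2))) *
          Real.exp (((θ ^ 2 + 1) / ((θ ^ 2 + 2) * (θ ^ 2 + 3))) * ∑ t : Fin T, (θ - y t) ^ 2))
        (Filter.cocompact ℝ) (nhds (Real.exp T)) ∧
      ∃ M : ℝ, ∀ θ : ℝ,
        ∫ u : Fin T → ℝ,
            (∏ t : Fin T, gaussianPDFReal (u t) 1 (y t) /
              gaussianPDFReal θ (Real.toNNReal ((θ ^ 2 + 2) / (θ ^ 2 + 1))) (y t)) ^ 2
          ∂(Measure.pi fun _ : Fin T => gaussianReal θ (Real.toNNReal (1 / (θ ^ 2 + 1)))) ≤ M :=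
  second_moment_uniform_bound_general T y
end

section
/- Let {P_γ}_{γ∈Y} be a family of Markov kernels on (X, B(X)) and let D_ℓ = sup_x ‖P_{N_{ℓ+1}}(x, ·) − P_{N_ℓ}(x, ·)‖_TV where N_ℓ is the (random) adaptation index at iteration ℓ. Suppose the adaptation rule only changes N (i.e., N_{ℓ+1} ≠ N_ℓ) with conditional probability at most p_{⌊ℓ/K⌋} given the history, where p_j → 0 as j → ∞. Then for every ε > 0, P(D_ℓ ≥ ε) → 0 as ℓ → ∞. -/
open MeasureTheory Filter

theorem measure_le_ofReal_of_condExp_indicator_le {Ω : Type*} {m mΩ : MeasurableSpace Ω}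
    {μ : Measure Ω} [IsProbabilityMeasure μ] {s : Set Ω} {c : ℝ} (hm : m ≤ mΩ)
    (hs : MeasurableSet s) (h : μ[s.indicator (fun _ => (1 : ℝ)) | m] ≤ᵐ[μ] fun _ => c) :
    μ s ≤ ENNReal.ofReal c := by
  have hreal : μ.real s ≤ c :=
    calc μ.real s = ∫ ω, s.indicator (fun _ => (1 : ℝ)) ω ∂μ := (integral_indicator_one hs).symm
      _ = ∫ ω, μ[s.indicator (fun _ => (1 : ℝ)) | m] ω ∂μ := (integral_condExp hm).symm
      _ ≤ ∫ _, c ∂μ := integral_mono_ae integrable_condExp (integrable_const c) h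
      _ = c := by simp
  rw [← ofReal_measureReal]
  exact ENNReal.ofReal_le_ofReal hreal

/-- The distance `sup_x ‖P i x - P j x‖_TV`, with the total variation written as a supremum
over all sets. -/
noncomputable def supTVDist {ι X : Type*} [MeasurableSpace X] (P : ι → X → Measure X)
    (i j : ι) : ENNReal :=
  ⨆ x : X, ⨆ A : Set X, (P i x A - P j x A) ⊔ (P j x A - P i x A)

theorem supTVDist_self {ι X : Type*} [MeasurableSpace X] (P : ι → X → Measure X) (i : ι) :
    supTVDist P i i = 0 := by
  simp [supTVDist]

theorem ne_of_le_supTVDist {ι X : Type*} [MeasurableSpace X] {P : ι → X → Measure X}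
    {i j : ι} {ε : ENNReal} (hε : 0 < ε) (h : ε ≤ supTVDist P i j) : i ≠ j := by
  rintro rfl
  exact (hε.trans_le h).ne' (supTVDist_self P i)

/-- Diminishing adaptation (Lemma 1): if the adaptation index `N` changes with conditional
probability (given the history) at most `p_{⌊ℓ/K⌋} → 0`, then
`D_ℓ = sup_x ‖P_{N_{ℓ+1}}(x,·) − P_{N_ℓ}(x,·)‖_TV` converges to `0` in probability. -/
theorem diminishing_adaptation
    {Ω X : Type*} [MeasurableSpace X] {mΩ : MeasurableSpace Ω}
    (μ : Measure Ω) [IsProbabilityMeasure μ]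
    (P : ℕ → X → Measure X)
    (N : ℕ → Ω → ℕ) (hN : ∀ ℓ, Measurable (N ℓ))
    (K : ℕ) (hK : 0 < K) (pr : ℕ → ℝ) (hpr : Tendsto pr atTop (nhds 0))
    (𝒢 : ℕ → MeasurableSpace Ω) (h𝒢 : ∀ ℓ, 𝒢 ℓ ≤ mΩ)
    (hadapt : ∀ ℓ,
      μ[Set.indicator {ω | N (ℓ + 1) ω ≠ N ℓ ω} (fun _ => (1 : ℝ)) | 𝒢 ℓ]
        ≤ᵐ[μ] fun _ => pr (ℓ / K)) :
    ∀ ε : ENNReal, 0 < ε →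
      Tendsto
        (fun ℓ => μ {ω | ε ≤ ⨆ x : X, ⨆ A : Set X,
          (P (N (ℓ + 1) ω) x A - P (N ℓ ω) x A) ⊔ (P (N ℓ ω) x A - P (N (ℓ + 1) ω) x A)})
        atTop (nhds 0) := by
  intro ε hε
  have hsub : ∀ ℓ, {ω | ε ≤ supTVDist P (N (ℓ + 1) ω) (N ℓ ω)} ⊆ {ω | N (ℓ + 1) ω ≠ N ℓ ω} :=
    fun ℓ _ hω => ne_of_le_supTVDist hε hω
  have hchange : ∀ ℓ, μ {ω | N (ℓ + 1) ω ≠ N ℓ ω} ≤ ENNReal.ofReal (pr (ℓ / K)) := fun ℓ =>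
    measure_le_ofReal_of_condExp_indicator_le (h𝒢 ℓ)
      (measurableSet_eq_fun (hN (ℓ + 1)) (hN ℓ)).compl (hadapt ℓ)
  have hlim : Tendsto (fun ℓ => ENNReal.ofReal (pr (ℓ / K))) atTop (nhds 0) := by
    rw [← ENNReal.ofReal_zero]
    exact ENNReal.tendsto_ofReal (hpr.comp (Nat.tendsto_div_const_atTop hK.ne'))
  exact tendsto_of_tendsto_of_tendsto_of_le_of_le tendsto_const_nhds hlim
    (fun _ => zero_le) (fun ℓ => (measure_mono (hsub ℓ)).trans (hchange ℓ))
end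

section
/- Let P be a Markov kernel on (X, 𝒮), ν a probability measure, C ∈ 𝒮, ε > 0, b, c > 0, 0 < α ≤ 1, and V : X → [1, ∞) measurable, satisfying P(x, ·) ≥ ε 1_C(x) ν(·) and PV(x) ≤ V(x) − c V(x)^{1−α} + b 1_C(x) for all x. Then P admits an invariant probability measure π with π(V^{1−α}) < ∞. -/
open MeasureTheory ProbabilityTheory Set Filter
open scoped ENNReal Topology

/-!
On `C` the kernel dominates `ε ν`, so it splits as `P x = R x + ε 1_C(x) ν` with a
sub-Markov residual kernel `R`: a step of `P` either regenerates, with probability `ε 1_C`,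
drawing the next state from `ν`, or moves by `R`. The measure `π₀ = ∑ₙ ν Rⁿ` satisfies
`π₀ P = π₀ R + π₀(ε 1_C) ν = (π₀ - ν) + π₀(ε 1_C) ν`, so it is invariant as soon as
`π₀(ε 1_C) = 1`, i.e. as soon as no mass is lost; since the mass of `ν Rⁿ` decreases by
`ν Rⁿ(ε 1_C)` at each step, this holds whenever `π₀` is finite. Finiteness comes from
summing the drift inequality along `ν Rⁿ` (the comparison theorem):
`c π₀(V^{1-α}) ≤ ν(V) + b π₀(C)`, where `ε π₀(C) ≤ 1`, `ν(V) < ∞` by the minorization at a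
point of `C` (nonempty, since otherwise `δₓ Pⁿ(V) ≥ 0` would decrease by `c` at every step),
and `V^{1-α} ≥ 1` also bounds the total mass of `π₀`. Normalizing `π₀` gives `π`.
-/

namespace ENNReal

open Finset

theorem sum_range_add_le_of_add_le {v u f : ℕ → ℝ≥0∞} (h : ∀ n, v (n + 1) + u n ≤ v n + f n)
    (N : ℕ) : v N + ∑ n ∈ range N, u n ≤ v 0 + ∑ n ∈ range N, f n := by
  induction N with
  | zero => simp
  | succ N ih =>
    calc v (N + 1) + ∑ n ∈ range (N + 1), u n
        = (v (N + 1) + u N) + ∑ n ∈ range N, u n := by rw [sum_range_succ]; ring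
      _ ≤ (v N + f N) + ∑ n ∈ range N, u n := by gcongr ?_ + _; exact h N
      _ = (v N + ∑ n ∈ range N, u n) + f N := add_right_comm _ _ _
      _ ≤ v 0 + ∑ n ∈ range (N + 1), f n := by rw [sum_range_succ, ← add_assoc]; gcongr

theorem tsum_le_add_tsum_of_add_le {v u f : ℕ → ℝ≥0∞} (h : ∀ n, v (n + 1) + u n ≤ v n + f n) :
    ∑' n, u n ≤ v 0 + ∑' n, f n :=
  tsum_le_of_sum_range_le fun N ↦ calc
    ∑ n ∈ range N, u n ≤ v N + ∑ n ∈ range N, u n := le_add_self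
    _ ≤ v 0 + ∑ n ∈ range N, f n := sum_range_add_le_of_add_le h N
    _ ≤ v 0 + ∑' n, f n := by gcongr; exact ENNReal.sum_le_tsum _

theorem tsum_eq_of_add_eq {a g : ℕ → ℝ≥0∞} (h : ∀ n, a (n + 1) + g n = a n)
    (ha : ∑' n, a n ≠ ∞) : ∑' n, g n = a 0 := by
  have hpartial : ∀ N, a N + ∑ n ∈ range N, g n = a 0 := by
    intro N
    induction N with
    | zero => simp
    | succ N ih => rw [sum_range_succ, add_comm _ (g N), ← add_assoc, h N, ih]
  have hlim : Tendsto (fun N ↦ a N + ∑ n ∈ range N, g n) atTop (𝓝 (0 + ∑' n, g n)) :=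
    (tendsto_atTop_zero_of_tsum_ne_top ha).add (tendsto_nat_tsum g)
  simp only [hpartial, zero_add] at hlim
  exact tendsto_nhds_unique hlim tendsto_const_nhds

end ENNReal

namespace ProbabilityTheory.Kernel

variable {X : Type*} [MeasurableSpace X]

lemma pow_zero_comp (R : Kernel X X) (μ : Measure X) : ⇑(R ^ 0) ∘ₘ μ = μ := by
  rw [pow_zero]
  exact Measure.id_comp

lemma pow_succ_comp (R : Kernel X X) (n : ℕ) (μ : Measure X) :
    ⇑(R ^ (n + 1)) ∘ₘ μ = R ∘ₘ (⇑(R ^ n) ∘ₘ μ) := by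
  rw [pow_succ', Measure.comp_assoc]
  rfl

lemma pow_comp_apply_univ (P : Kernel X X) [IsMarkovKernel P] (n : ℕ) (μ : Measure X) :
    (⇑(P ^ n) ∘ₘ μ) univ = μ univ := by
  induction n with
  | zero => rw [pow_zero_comp]
  | succ n ih => rw [pow_succ_comp, Measure.comp_apply_univ, ih]

noncomputable def potential (R : Kernel X X) (μ : Measure X) : Measure X :=
  Measure.sum fun n ↦ ⇑(R ^ n) ∘ₘ μ

lemma lintegral_potential (R : Kernel X X) (μ : Measure X) (f : X → ℝ≥0∞) :
    ∫⁻ x, f x ∂potential R μ = ∑' n, ∫⁻ x, f x ∂(⇑(R ^ n) ∘ₘ μ) :=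
  lintegral_sum_measure _ _

/-- The comparison theorem (Meyn–Tweedie, Thm. 14.2.2). -/
theorem lintegral_potential_le_of_drift {R : Kernel X X} {W U f : X → ℝ≥0∞} (hW : Measurable W)
    (hdrift : ∀ x, ∫⁻ y, W y ∂(R x) + U x ≤ W x + f x) (μ : Measure X) :
    ∫⁻ x, U x ∂potential R μ ≤ ∫⁻ x, W x ∂μ + ∫⁻ x, f x ∂potential R μ := by
  have hstep (n : ℕ) : ∫⁻ x, W x ∂(⇑(R ^ (n + 1)) ∘ₘ μ) + ∫⁻ x, U x ∂(⇑(R ^ n) ∘ₘ μ) ≤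
      ∫⁻ x, W x ∂(⇑(R ^ n) ∘ₘ μ) + ∫⁻ x, f x ∂(⇑(R ^ n) ∘ₘ μ) := calc
    _ ≤ ∫⁻ x, ∫⁻ y, W y ∂(R x) ∂(⇑(R ^ n) ∘ₘ μ) + ∫⁻ x, U x ∂(⇑(R ^ n) ∘ₘ μ) := by
        rw [pow_succ_comp]; gcongr ?_ + _; exact Measure.lintegral_bind_le _ _ _
    _ ≤ ∫⁻ x, (∫⁻ y, W y ∂(R x) + U x) ∂(⇑(R ^ n) ∘ₘ μ) := le_lintegral_add _ _
    _ ≤ ∫⁻ x, (W x + f x) ∂(⇑(R ^ n) ∘ₘ μ) := lintegral_mono hdrift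
    _ = ∫⁻ x, W x ∂(⇑(R ^ n) ∘ₘ μ) + ∫⁻ x, f x ∂(⇑(R ^ n) ∘ₘ μ) := lintegral_add_left hW _
  have h := ENNReal.tsum_le_add_tsum_of_add_le hstep
  rwa [pow_zero_comp, ← lintegral_potential, ← lintegral_potential] at h

theorem not_forall_lintegral_add_le {P : Kernel X X} [IsMarkovKernel P] {W U : X → ℝ≥0∞}
    (hW : Measurable W) {x₀ : X} (hx₀ : W x₀ ≠ ∞) {δ : ℝ≥0∞} (hδ : δ ≠ 0) (hU : ∀ x, δ ≤ U x) :
    ¬ ∀ x, ∫⁻ y, W y ∂(P x) + U x ≤ W x := by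
  intro hdrift
  have hle := lintegral_potential_le_of_drift (f := 0) hW (by simpa using hdrift) (Measure.dirac x₀)
  have hge : ∞ ≤ ∫⁻ x, U x ∂potential P (Measure.dirac x₀) := calc
    ∞ = ∑' _ : ℕ, δ := (ENNReal.tsum_const_eq_top_of_ne_zero hδ).symm
    _ ≤ ∑' n, ∫⁻ x, U x ∂(⇑(P ^ n) ∘ₘ Measure.dirac x₀) := ENNReal.tsum_le_tsum fun n ↦ calc
        δ = ∫⁻ _, δ ∂(⇑(P ^ n) ∘ₘ Measure.dirac x₀) := by simp [pow_comp_apply_univ]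
        _ ≤ ∫⁻ x, U x ∂(⇑(P ^ n) ∘ₘ Measure.dirac x₀) := lintegral_mono hU
    _ = ∫⁻ x, U x ∂potential P (Measure.dirac x₀) := (lintegral_potential _ _ _).symm
  rw [lintegral_dirac' _ hW, Pi.zero_def, lintegral_zero, add_zero] at hle
  exact hx₀ (top_le_iff.1 (hge.trans hle))

theorem exists_eq_add_smul {P : Kernel X X} [IsFiniteKernel P] {g : X → ℝ≥0∞} (hg : Measurable g)
    {ν : Measure X} (hle : ∀ x, g x • ν ≤ P x) : ∃ R : Kernel X X, ∀ x, P x = R x + g x • ν := by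
  have (x : X) : IsFiniteMeasure (g x • ν) := isFiniteMeasure_of_le (P x) (hle x)
  refine ⟨⟨fun x ↦ P x - g x • ν, Measure.measurable_of_measurable_coe _ fun s hs ↦ ?_⟩,
    fun x ↦ (Measure.sub_add_cancel_of_le (hle x)).symm⟩
  have hsub : (fun x ↦ (P x - g x • ν) s) = fun x ↦ P x s - g x * ν s := funext fun x ↦ by
    rw [Measure.sub_apply hs (hle x), Measure.smul_apply, smul_eq_mul]
  rw [hsub]
  exact (P.measurable_coe hs).sub (hg.mul_const _)

section Splitting

variable {P R : Kernel X X} {g : X → ℝ≥0∞} {ν : Measure X}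

lemma comp_eq_comp_add_smul (hg : Measurable g) (hPR : ∀ x, P x = R x + g x • ν)
    (μ : Measure X) : P ∘ₘ μ = R ∘ₘ μ + (∫⁻ x, g x ∂μ) • ν := by
  ext s hs
  rw [Measure.bind_apply hs P.aemeasurable, Measure.add_apply, Measure.bind_apply hs R.aemeasurable,
    Measure.smul_apply, smul_eq_mul, ← lintegral_mul_const _ hg,
    ← lintegral_add_left (R.measurable_coe hs)]
  refine lintegral_congr fun x ↦ ?_
  rw [hPR x, Measure.add_apply, Measure.smul_apply, smul_eq_mul]

theorem comp_potential_eq_self (hg : Measurable g) (hPR : ∀ x, P x = R x + g x • ν)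
    (hg1 : ∫⁻ x, g x ∂potential R ν = 1) : P ∘ₘ potential R ν = potential R ν := by
  rw [comp_eq_comp_add_smul hg hPR, hg1, one_smul, potential, Measure.bind_sum _ _ R.aemeasurable]
  ext s hs
  rw [Measure.add_apply, Measure.sum_apply _ hs, Measure.sum_apply _ hs,
    tsum_eq_zero_add' (f := fun n ↦ (⇑(R ^ n) ∘ₘ ν) s) ENNReal.summable, pow_zero_comp, add_comm]
  simp only [pow_succ_comp]

variable [IsMarkovKernel P] [IsProbabilityMeasure ν]

lemma comp_apply_univ_add_lintegral (hg : Measurable g) (hPR : ∀ x, P x = R x + g x • ν)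
    (μ : Measure X) : (R ∘ₘ μ) univ + ∫⁻ x, g x ∂μ = μ univ := by
  simpa [Measure.comp_apply_univ] using
    (congr_arg (fun m : Measure X ↦ m univ) (comp_eq_comp_add_smul hg hPR μ)).symm

lemma lintegral_potential_le (hg : Measurable g) (hPR : ∀ x, P x = R x + g x • ν)
    (μ : Measure X) : ∫⁻ x, g x ∂potential R μ ≤ μ univ := by
  rw [lintegral_potential]
  have h := ENNReal.tsum_le_add_tsum_of_add_le (v := fun n ↦ (⇑(R ^ n) ∘ₘ μ) univ) (f := 0)
    fun n ↦ le_of_eq <| by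
      rw [pow_succ_comp, comp_apply_univ_add_lintegral hg hPR, Pi.zero_apply, add_zero]
  rwa [pow_zero_comp, Pi.zero_def, tsum_zero, add_zero] at h

lemma lintegral_potential_eq (hg : Measurable g) (hPR : ∀ x, P x = R x + g x • ν)
    {μ : Measure X} (hμ : potential R μ univ ≠ ∞) : ∫⁻ x, g x ∂potential R μ = μ univ := by
  rw [lintegral_potential]
  conv_rhs => rw [← pow_zero_comp R μ]
  refine ENNReal.tsum_eq_of_add_eq (a := fun n ↦ (⇑(R ^ n) ∘ₘ μ) univ) (fun n ↦ ?_)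
    (by rwa [potential, Measure.sum_apply _ MeasurableSet.univ] at hμ)
  rw [pow_succ_comp, comp_apply_univ_add_lintegral hg hPR]

theorem lintegral_potential_ne_top {C : Set X} (hC : MeasurableSet C) {ε : ℝ≥0∞} (hε : ε ≠ 0)
    (hPR : ∀ x, P x = R x + C.indicator (fun _ ↦ ε) x • ν) {W U : X → ℝ≥0∞}
    (hW : Measurable W) (hνW : ∫⁻ x, W x ∂ν ≠ ∞) {b c : ℝ≥0∞} (hb : b ≠ ∞) (hc : c ≠ 0)
    (hdrift : ∀ x, ∫⁻ y, W y ∂(R x) + c * U x ≤ W x + C.indicator (fun _ ↦ b) x) :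
    ∫⁻ x, U x ∂potential R ν ≠ ∞ := by
  have hC_fin : potential R ν C ≠ ∞ := by
    have h := lintegral_potential_le (measurable_const.indicator hC) hPR ν
    rw [lintegral_indicator_const hC, measure_univ] at h
    exact (ENNReal.lt_top_of_mul_ne_top_right (ne_top_of_le_ne_top ENNReal.one_ne_top h) hε).ne
  have h := (lintegral_const_mul_le c U).trans (lintegral_potential_le_of_drift hW hdrift ν)
  rw [lintegral_indicator_const hC] at h
  exact (ENNReal.lt_top_of_mul_ne_top_right (ne_top_of_le_ne_top
    (ENNReal.add_ne_top.2 ⟨hνW, ENNReal.mul_ne_top hb hC_fin⟩) h) hc).ne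

end Splitting

theorem nonempty_of_drift {P : Kernel X X} [IsMarkovKernel P] [Nonempty X] {C : Set X}
    {W U : X → ℝ≥0∞} (hW : Measurable W) (hW_fin : ∀ x, W x ≠ ∞) (hU : ∀ x, 1 ≤ U x)
    {b c : ℝ≥0∞} (hc : c ≠ 0)
    (hdrift : ∀ x, ∫⁻ y, W y ∂(P x) + c * U x ≤ W x + C.indicator (fun _ ↦ b) x) :
    C.Nonempty := by
  rw [Set.nonempty_iff_ne_empty]
  rintro rfl
  obtain ⟨x₀⟩ := ‹Nonempty X›
  exact not_forall_lintegral_add_le hW (hW_fin x₀) hc (fun x ↦ le_mul_of_one_le_right' (hU x))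
    (by simpa using hdrift)

theorem exists_isProbabilityMeasure_comp_eq_self {P : Kernel X X} {μ : Measure X}
    (hμ : P ∘ₘ μ = μ) (h0 : μ ≠ 0) (hfin : μ univ ≠ ∞) {U : X → ℝ≥0∞} (hU : ∫⁻ x, U x ∂μ ≠ ∞) :
    ∃ π : Measure X, IsProbabilityMeasure π ∧ P ∘ₘ π = π ∧ ∫⁻ x, U x ∂π < ∞ := by
  have : IsFiniteMeasure μ := ⟨hfin.lt_top⟩
  have : NeZero μ := ⟨h0⟩
  refine ⟨(μ univ)⁻¹ • μ, inferInstance, by rw [Measure.comp_smul, hμ], ?_⟩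
  rw [lintegral_smul_measure]
  exact ENNReal.mul_lt_top (ENNReal.inv_lt_top.2 (NeZero.pos _)) hU.lt_top

theorem exists_invariant_of_drift_of_minorization {P : Kernel X X} [IsMarkovKernel P]
    {ν : Measure X} [IsProbabilityMeasure ν] {C : Set X} (hC : MeasurableSet C) {ε : ℝ≥0∞}
    (hε : ε ≠ 0) (hminor : ∀ x ∈ C, ε • ν ≤ P x) {W U : X → ℝ≥0∞} (hW : Measurable W)
    (hW_fin : ∀ x, W x ≠ ∞) (hU : ∀ x, 1 ≤ U x) {b c : ℝ≥0∞} (hb : b ≠ ∞) (hc : c ≠ 0)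
    (hdrift : ∀ x, ∫⁻ y, W y ∂(P x) + c * U x ≤ W x + C.indicator (fun _ ↦ b) x) :
    ∃ π : Measure X, IsProbabilityMeasure π ∧ P ∘ₘ π = π ∧ ∫⁻ x, U x ∂π < ∞ := by
  have := nonempty_of_isProbabilityMeasure ν
  obtain ⟨x₁, hx₁⟩ := nonempty_of_drift hW hW_fin hU hc hdrift
  set g : X → ℝ≥0∞ := C.indicator fun _ ↦ ε
  have hg : Measurable g := measurable_const.indicator hC
  obtain ⟨R, hPR⟩ := exists_eq_add_smul (P := P) hg (ν := ν) fun x ↦ by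
    by_cases hx : x ∈ C
    · simpa [g, hx] using hminor x hx
    · simp [g, hx, Measure.zero_le]
  have hRdrift (x : X) : ∫⁻ y, W y ∂(R x) + c * U x ≤ W x + C.indicator (fun _ ↦ b) x := by
    refine le_trans ?_ (hdrift x)
    gcongr ?_ + _
    exact lintegral_mono' (by rw [hPR x]; exact Measure.le_add_right le_rfl) le_rfl
  have hνW : ∫⁻ x, W x ∂ν ≠ ∞ := by
    have hPW : ∫⁻ y, W y ∂(P x₁) ≠ ∞ :=
      ne_top_of_le_ne_top (ENNReal.add_ne_top.2 ⟨hW_fin x₁, by simpa [hx₁] using hb⟩)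
        (le_self_add.trans (hdrift x₁))
    have : ε * ∫⁻ x, W x ∂ν ≤ ∫⁻ y, W y ∂(P x₁) := by
      rw [← smul_eq_mul, ← lintegral_smul_measure]
      exact lintegral_mono' (hminor x₁ hx₁) le_rfl
    exact (ENNReal.lt_top_of_mul_ne_top_right (ne_top_of_le_ne_top hPW this) hε).ne
  have hU_fin := lintegral_potential_ne_top hC hε hPR hW hνW hb hc hRdrift
  have huniv : potential R ν univ ≠ ∞ :=
    ne_top_of_le_ne_top hU_fin (by simpa using lintegral_mono hU)
  have hg1 : ∫⁻ x, g x ∂potential R ν = 1 := by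
    rw [lintegral_potential_eq hg hPR huniv, measure_univ]
  refine exists_isProbabilityMeasure_comp_eq_self (comp_potential_eq_self hg hPR hg1)
    (fun h ↦ by simp [h] at hg1) huniv hU_fin

end ProbabilityTheory.Kernel

theorem invariant_measure_of_polynomial_drift_general
    {X : Type*} [MeasurableSpace X]
    (P : ProbabilityTheory.Kernel X X) [ProbabilityTheory.IsMarkovKernel P]
    (ν : Measure X) [IsProbabilityMeasure ν]
    (C : Set X) (hC : MeasurableSet C)
    (ε b c α : ℝ) (hε : 0 < ε) (hb : 0 < b) (hc : 0 < c) (hα1 : α ≤ 1)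
    (V : X → ℝ) (hV : Measurable V) (hV1 : ∀ x, 1 ≤ V x)
    (hminor : ∀ x ∈ C, ∀ A : Set X, MeasurableSet A →
      ENNReal.ofReal ε * ν A ≤ P x A)
    (hint : ∀ x, Integrable V (P x))
    (hdrift : ∀ x, ∫ y, V y ∂(P x) ≤
      V x - c * V x ^ (1 - α) + b * Set.indicator C (fun _ => (1 : ℝ)) x) :
    ∃ π : Measure X, IsProbabilityMeasure π ∧ π.bind P = π ∧
      ∫⁻ x, ENNReal.ofReal (V x ^ (1 - α)) ∂π < ⊤ := by
  have hV0 (x : X) : 0 ≤ V x := zero_le_one.trans (hV1 x)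
  have hdrift' (x : X) : ∫⁻ y, ENNReal.ofReal (V y) ∂(P x) +
      ENNReal.ofReal c * ENNReal.ofReal (V x ^ (1 - α)) ≤
      ENNReal.ofReal (V x) + C.indicator (fun _ ↦ ENNReal.ofReal b) x := by
    have hrhs : ENNReal.ofReal (V x) + C.indicator (fun _ ↦ ENNReal.ofReal b) x =
        ENNReal.ofReal (V x + b * C.indicator (fun _ ↦ (1 : ℝ)) x) := by
      by_cases hx : x ∈ C <;> simp [hx, ENNReal.ofReal_add (hV0 x) hb.le]
    rw [hrhs, ← ofReal_integral_eq_lintegral_ofReal (hint x) (ae_of_all _ hV0),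
      ← ENNReal.ofReal_mul hc.le, ← ENNReal.ofReal_add (integral_nonneg hV0)
        (mul_nonneg hc.le (Real.rpow_nonneg (hV0 x) _))]
    exact ENNReal.ofReal_le_ofReal (by linarith [hdrift x])
  exact Kernel.exists_invariant_of_drift_of_minorization hC (ENNReal.ofReal_pos.2 hε).ne'
    (fun x hx ↦ Measure.le_iff.2 fun A hA ↦ by simpa using hminor x hx A hA) hV.ennreal_ofReal
    (fun _ ↦ ENNReal.ofReal_ne_top)
    (fun x ↦ ENNReal.one_le_ofReal.2 (Real.one_le_rpow (hV1 x) (by linarith)))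
    ENNReal.ofReal_ne_top (ENNReal.ofReal_pos.2 hc).ne' hdrift'

/-- Proposition A.1(i) of Atchadé–Fort: a polynomial drift condition toward a small set
yields an invariant probability measure `π` with `π(V^{1−α}) < ∞`. -/
theorem invariant_measure_of_polynomial_drift
    {X : Type*} [MeasurableSpace X]
    (P : ProbabilityTheory.Kernel X X) [ProbabilityTheory.IsMarkovKernel P]
    (ν : Measure X) [IsProbabilityMeasure ν]
    (C : Set X) (hC : MeasurableSet C)
    (ε b c α : ℝ) (hε : 0 < ε) (hb : 0 < b) (hc : 0 < c) (hα : 0 < α) (hα1 : α ≤ 1)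
    (V : X → ℝ) (hV : Measurable V) (hV1 : ∀ x, 1 ≤ V x)
    (hminor : ∀ x ∈ C, ∀ A : Set X, MeasurableSet A →
      ENNReal.ofReal ε * ν A ≤ P x A)
    (hint : ∀ x, Integrable V (P x))
    (hdrift : ∀ x, ∫ y, V y ∂(P x) ≤
      V x - c * V x ^ (1 - α) + b * Set.indicator C (fun _ => (1 : ℝ)) x) :
    ∃ π : Measure X, IsProbabilityMeasure π ∧ π.bind P = π ∧
      ∫⁻ x, ENNReal.ofReal (V x ^ (1 - α)) ∂π < ⊤ :=
  invariant_measure_of_polynomial_drift_general P ν C hC ε b c α hε hb hc hα1 V hV hV1 hminor hint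
    hdrift
end

section
/- Let π(θ) ∝ ((θ²+1)/(θ²+2))^{T/2} exp(−(1/2)(((θ²+1)/(θ²+2)) ∑_{t=1}^T (θ−y_t)² + θ²/σ₀²)) on ℝ. Then limsup_{|θ|→∞} (θ/|θ|) · (π'(θ)/|π'(θ)|) < 0; indeed this limit equals −1. -/
/-!
Write the density as `p = Z·exp φ`, using `u^(T/2) = exp ((T/2)·log u)` for the ratio
`u = (θ²+1)/(θ²+2) ∈ (0, 1]`. Then `θ·p'(θ)` has the sign of `θ·φ'(θ)`, and the Gaussian prior
term dominates: `θ·φ'(θ) ≤ T + ½∑ y_t² − θ²/σ₀²`, which is negative for large `|θ|`. Once `θ` and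
`p'(θ)` have opposite signs, `(θ/|θ|)·(p'(θ)/|p'(θ)|) = −1` exactly.
-/

open Filter Topology Real

lemma div_abs_mul_div_abs_of_mul_neg {a b : ℝ} (h : a * b < 0) : a / |a| * (b / |b|) = -1 := by
  rw [div_mul_div_comm, ← abs_mul, abs_of_neg h, div_neg, div_self h.ne]

lemma tendsto_div_abs_mul_div_abs_of_eventually_mul_neg {α : Type*} {l : Filter α}
    {f g : α → ℝ} (h : ∀ᶠ x in l, f x * g x < 0) :
    Tendsto (fun x => f x / |f x| * (g x / |g x|)) l (𝓝 (-1)) :=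
  tendsto_const_nhds.congr' (h.mono fun _ hx => (div_abs_mul_div_abs_of_mul_neg hx).symm)

namespace SyntheticPosterior

noncomputable def ratio (θ : ℝ) : ℝ := (θ ^ 2 + 1) / (θ ^ 2 + 2)

lemma ratio_pos (θ : ℝ) : 0 < ratio θ := by unfold ratio; positivity

lemma ratio_le_one (θ : ℝ) : ratio θ ≤ 1 :=
  div_le_one_of_le₀ (by linarith) (by positivity)

lemma hasDerivAt_ratio (θ : ℝ) : HasDerivAt ratio (2 * θ / (θ ^ 2 + 2) ^ 2) θ := by
  refine (((hasDerivAt_pow 2 θ).add_const 1).fun_div ((hasDerivAt_pow 2 θ).add_const 2)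
    (by positivity)).congr_deriv ?_
  simp only [Nat.cast_ofNat]
  ring

variable {T : ℕ} (y : Fin T → ℝ) (σ₀ : ℝ)

noncomputable def logDensity (θ : ℝ) : ℝ :=
  T / 2 * log (ratio θ) - 1 / 2 * (ratio θ * ∑ t, (θ - y t) ^ 2 + θ ^ 2 / σ₀ ^ 2)

noncomputable def logDensityDeriv (θ : ℝ) : ℝ :=
  T / 2 * (2 * θ / (θ ^ 2 + 2) ^ 2 / ratio θ)
    - 1 / 2 * (2 * θ / (θ ^ 2 + 2) ^ 2 * ∑ t, (θ - y t) ^ 2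
      + ratio θ * ∑ t, 2 * (θ - y t) + 2 * θ / σ₀ ^ 2)

lemma density_eq_exp_logDensity (θ : ℝ) :
    ((θ ^ 2 + 1) / (θ ^ 2 + 2)) ^ ((T : ℝ) / 2) * exp (-(1 / 2) *
      (((θ ^ 2 + 1) / (θ ^ 2 + 2)) * ∑ t, (θ - y t) ^ 2 + θ ^ 2 / σ₀ ^ 2))
      = exp (logDensity y σ₀ θ) := by
  rw [logDensity, sub_eq_add_neg, exp_add, ← neg_mul, mul_comm _ (log _),
    ← rpow_def_of_pos (ratio_pos θ), ratio]

lemma hasDerivAt_logDensity (θ : ℝ) :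
    HasDerivAt (logDensity y σ₀) (logDensityDeriv y σ₀ θ) θ := by
  have hS : HasDerivAt (fun θ => ∑ t, (θ - y t) ^ 2) (∑ t, 2 * (θ - y t)) θ := by
    refine HasDerivAt.fun_sum fun t _ => ?_
    simpa [mul_comm] using ((hasDerivAt_id θ).sub_const (y t)).fun_pow 2
  have hq : HasDerivAt (fun θ => θ ^ 2 / σ₀ ^ 2) (2 * θ / σ₀ ^ 2) θ := by
    simpa using (hasDerivAt_pow 2 θ).div_const (σ₀ ^ 2)
  exact (((hasDerivAt_ratio θ).log (ratio_pos θ).ne').const_mul _).sub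
    ((((hasDerivAt_ratio θ).mul hS).add hq).const_mul _)

lemma mul_logDensityDeriv_le (θ : ℝ) :
    θ * logDensityDeriv y σ₀ θ ≤ T + (∑ t, y t ^ 2) / 2 - θ ^ 2 / σ₀ ^ 2 := by
  have hratio_term : θ * (2 * θ / (θ ^ 2 + 2) ^ 2 / ratio θ) ≤ 2 := by
    have h : θ * (2 * θ / (θ ^ 2 + 2) ^ 2 / ratio θ) = 2 * θ ^ 2 / ((θ ^ 2 + 2) * (θ ^ 2 + 1)) := by
      rw [ratio]; field_simp
    rw [h, div_le_iff₀ (by positivity)]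
    nlinarith [sq_nonneg θ, sq_nonneg (θ ^ 2)]
  have hS_term : 0 ≤ θ * (2 * θ / (θ ^ 2 + 2) ^ 2) * ∑ t, (θ - y t) ^ 2 := by
    rw [show θ * (2 * θ / (θ ^ 2 + 2) ^ 2) = 2 * θ ^ 2 / (θ ^ 2 + 2) ^ 2 by ring]
    positivity
  -- `2θ(θ - y) ≥ θ² - y² ≥ -y²`, since `(θ - y)² ≥ 0`
  have hS'_term : -∑ t, y t ^ 2 ≤ θ * ∑ t, 2 * (θ - y t) := by
    rw [Finset.mul_sum, ← Finset.sum_neg_distrib]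
    exact Finset.sum_le_sum fun t _ => by nlinarith [sq_nonneg (θ - y t), sq_nonneg θ]
  have hy : 0 ≤ ∑ t, y t ^ 2 := by positivity
  have hcross : -(ratio θ * (θ * ∑ t, 2 * (θ - y t))) ≤ ∑ t, y t ^ 2 := by
    nlinarith [ratio_pos θ, ratio_le_one θ]
  have hprior : θ * (2 * θ / σ₀ ^ 2) = 2 * (θ ^ 2 / σ₀ ^ 2) := by ring
  have hT_term := mul_le_mul_of_nonneg_left hratio_term (by positivity : (0 : ℝ) ≤ T / 2)
  have expand : θ * logDensityDeriv y σ₀ θ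
      = T / 2 * (θ * (2 * θ / (θ ^ 2 + 2) ^ 2 / ratio θ))
        - 1 / 2 * (θ * (2 * θ / (θ ^ 2 + 2) ^ 2) * ∑ t, (θ - y t) ^ 2)
        - 1 / 2 * (ratio θ * (θ * ∑ t, 2 * (θ - y t))) - 1 / 2 * (θ * (2 * θ / σ₀ ^ 2)) := by
    rw [logDensityDeriv]; ring
  rw [expand, hprior]
  linarith

lemma eventually_mul_logDensityDeriv_neg (hσ₀ : σ₀ ≠ 0) :
    ∀ᶠ θ in cocompact ℝ, θ * logDensityDeriv y σ₀ θ < 0 := by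
  have hsq : Tendsto (fun θ : ℝ => θ ^ 2) (cocompact ℝ) atTop := by
    simpa only [Function.comp_def, norm_eq_abs, sq_abs] using
      (tendsto_pow_atTop two_ne_zero).comp (tendsto_norm_cocompact_atTop (E := ℝ))
  filter_upwards [hsq.eventually_gt_atTop (σ₀ ^ 2 * (T + (∑ t, y t ^ 2) / 2))] with θ hθ
  have hσ : 0 < σ₀ ^ 2 := by positivity
  have : T + (∑ t, y t ^ 2) / 2 < θ ^ 2 / σ₀ ^ 2 := by rwa [lt_div_iff₀ hσ, mul_comm]
  linarith [mul_logDensityDeriv_le y σ₀ θ]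

end SyntheticPosterior

open SyntheticPosterior in
theorem regular_contours_synthetic_general (T : ℕ) (y : Fin T → ℝ) (σ₀ : ℝ)
    (hσ₀ : 0 < σ₀) (Z : ℝ) (hZ : 0 < Z) (p : ℝ → ℝ)
    (hp : ∀ θ : ℝ, p θ = Z * (((θ ^ 2 + 1) / (θ ^ 2 + 2)) ^ ((T : ℝ) / 2) *
      Real.exp (-(1 / 2) * (((θ ^ 2 + 1) / (θ ^ 2 + 2)) * ∑ t : Fin T, (θ - y t) ^ 2
        + θ ^ 2 / σ₀ ^ 2)))) :
    Tendsto (fun θ : ℝ => (θ / |θ|) * (deriv p θ / |deriv p θ|))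
      (Filter.cocompact ℝ) (nhds (-1)) := by
  have hp_exp : p = fun θ => Z * exp (logDensity y σ₀ θ) :=
    funext fun θ => by rw [hp, density_eq_exp_logDensity]
  refine tendsto_div_abs_mul_div_abs_of_eventually_mul_neg ?_
  filter_upwards [eventually_mul_logDensityDeriv_neg y σ₀ hσ₀.ne'] with θ hθ
  have hderiv : deriv p θ = Z * (exp (logDensity y σ₀ θ) * logDensityDeriv y σ₀ θ) := by
    rw [hp_exp]
    exact ((hasDerivAt_logDensity y σ₀ θ).exp.const_mul Z).deriv
  rw [hderiv, mul_left_comm, mul_left_comm θ]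
  exact mul_neg_of_pos_of_neg hZ (mul_neg_of_pos_of_neg (exp_pos _) hθ)

/-- Regular contours for the synthetic-example posterior: the normalized gradient satisfies
`(θ/|θ|)·(π'(θ)/|π'(θ)|) → −1` as `|θ| → ∞`; in particular the limsup is negative. -/
theorem regular_contours_synthetic (T : ℕ) (hT : 1 ≤ T) (y : Fin T → ℝ) (σ₀ : ℝ)
    (hσ₀ : 0 < σ₀) (Z : ℝ) (hZ : 0 < Z) (p : ℝ → ℝ)
    (hp : ∀ θ : ℝ, p θ = Z * (((θ ^ 2 + 1) / (θ ^ 2 + 2)) ^ ((T : ℝ) / 2) *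
      Real.exp (-(1 / 2) * (((θ ^ 2 + 1) / (θ ^ 2 + 2)) * ∑ t : Fin T, (θ - y t) ^ 2
        + θ ^ 2 / σ₀ ^ 2)))) :
    Tendsto (fun θ : ℝ => (θ / |θ|) * (deriv p θ / |deriv p θ|))
      (Filter.cocompact ℝ) (nhds (-1)) :=
  regular_contours_synthetic_general T y σ₀ hσ₀ Z hZ p hp
end
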